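/- Let r | t with r, t positive integers, and let Γ₀(t)(r) = { (a b; c d) ∈ SL(2,ℤ) : a ≡ d ≡ 1 mod t, b ≡ 0 mod t, c ≡ 0 mod r } and Γ(t,r) = { (a b; c d) ∈ SL(2,ℤ) : a ≡ d ≡ 1 mod t, b ≡ 0 mod t², c ≡ 0 mod r }. Then Γ(t,r) is a subgroup of Γ₀(t)(r) of index t. -/

import Mathlib

open scoped MatrixGroups

/-- `Γ₀(t)(r) = { γ ∈ SL(2,ℤ) : a ≡ d ≡ 1 mod t, b ≡ 0 mod t, c ≡ 0 mod r }`. -/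
def Gamma0r (t r : ℕ) : Subgroup SL(2, ℤ) where
  carrier := {A | ((A 0 0 : ℤ) : ZMod t) = 1 ∧ ((A 1 1 : ℤ) : ZMod t) = 1 ∧
    ((A 0 1 : ℤ) : ZMod t) = 0 ∧ ((A 1 0 : ℤ) : ZMod r) = 0}
  one_mem' := by simp
  mul_mem' := by
    rintro A B ⟨a1, a2, a3, a4⟩ ⟨b1, b2, b3, b4⟩
    have hAB : ∀ i j : Fin 2, ((A * B : SL(2, ℤ)) i j : ℤ)
        = A i 0 * B 0 j + A i 1 * B 1 j := by
      intro i j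
      simp [Matrix.mul_apply, Fin.sum_univ_two]
    refine ⟨?_, ?_, ?_, ?_⟩ <;> push_cast [hAB] <;>
      simp [a1, a2, a3, a4, b1, b2, b3, b4]
  inv_mem' := by
    rintro A ⟨a1, a2, a3, a4⟩
    rw [Set.mem_setOf_eq, Matrix.SpecialLinearGroup.SL2_inv_expl]
    refine ⟨?_, ?_, ?_, ?_⟩ <;> push_cast <;> simp [a1, a2, a3, a4]

/-- `Γ(t,r) = { γ ∈ SL(2,ℤ) : a ≡ d ≡ 1 mod t, b ≡ 0 mod t², c ≡ 0 mod r }`. -/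
def GammaTR (t r : ℕ) : Subgroup SL(2, ℤ) where
  carrier := {A | ((A 0 0 : ℤ) : ZMod t) = 1 ∧ ((A 1 1 : ℤ) : ZMod t) = 1 ∧
    ((A 0 1 : ℤ) : ZMod (t ^ 2)) = 0 ∧ ((A 1 0 : ℤ) : ZMod r) = 0}
  one_mem' := by simp
  mul_mem' := by
    rintro A B ⟨a1, a2, a3, a4⟩ ⟨b1, b2, b3, b4⟩
    have hdt : ((t : ℤ)) ∣ ((t ^ 2 : ℕ) : ℤ) := by
      push_cast
      exact dvd_pow_self _ two_ne_zero
    have ha3t : ((A 0 1 : ℤ) : ZMod t) = 0 := by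
      rw [ZMod.intCast_zmod_eq_zero_iff_dvd] at a3 ⊢
      exact dvd_trans hdt a3
    have hb3t : ((B 0 1 : ℤ) : ZMod t) = 0 := by
      rw [ZMod.intCast_zmod_eq_zero_iff_dvd] at b3 ⊢
      exact dvd_trans hdt b3
    have hAB : ∀ i j : Fin 2, ((A * B : SL(2, ℤ)) i j : ℤ)
        = A i 0 * B 0 j + A i 1 * B 1 j := by
      intro i j
      simp [Matrix.mul_apply, Fin.sum_univ_two]
    refine ⟨?_, ?_, ?_, ?_⟩ <;> push_cast [hAB] <;>
      simp [a1, a2, a3, a4, b1, b2, b3, b4, ha3t, hb3t]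
  inv_mem' := by
    rintro A ⟨a1, a2, a3, a4⟩
    rw [Set.mem_setOf_eq, Matrix.SpecialLinearGroup.SL2_inv_expl]
    refine ⟨?_, ?_, ?_, ?_⟩ <;> push_cast <;> simp [a1, a2, a3, a4]


/-!
The map `(a b; c d) ↦ b / t mod t` is a homomorphism from `Γ₀(t)(r)` onto `ℤ/tℤ`: writing
`b = t x`, `b' = t y`, the upper-right entry of the product is `t (a y + x d')`, and
`a ≡ d' ≡ 1 mod t`. Its kernel consists of the matrices with `t² ∣ b`, which is `Γ(t,r)`, so the
index is `|ℤ/tℤ| = t`.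
-/

lemma GammaTR_le_Gamma0r (t r : ℕ) : GammaTR t r ≤ Gamma0r t r := by
  rintro A ⟨ha, hd, hb, hc⟩
  refine ⟨ha, hd, ?_, hc⟩
  rw [ZMod.intCast_zmod_eq_zero_iff_dvd] at hb ⊢
  exact (Int.natCast_dvd_natCast.mpr (dvd_pow_self t two_ne_zero)).trans hb

namespace Gamma0r

variable {t r : ℕ}

lemma natCast_dvd_upperRight {A : SL(2, ℤ)} (hA : A ∈ Gamma0r t r) : (t : ℤ) ∣ A 0 1 :=
  (ZMod.intCast_zmod_eq_zero_iff_dvd _ _).mp hA.2.2.1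

variable (t r) [NeZero t]

def upperRightDivHom : Gamma0r t r →* Multiplicative (ZMod t) where
  toFun A := .ofAdd ((A.1 0 1 / t : ℤ) : ZMod t)
  map_one' := by simp
  map_mul' := by
    rintro ⟨A, hA⟩ ⟨B, hB⟩
    obtain ⟨x, hx⟩ := natCast_dvd_upperRight hA
    obtain ⟨y, hy⟩ := natCast_dvd_upperRight hB
    have hAB : (A * B) 0 1 = t * (A 0 0 * y + x * B 1 1) := by
      simp only [Matrix.SpecialLinearGroup.coe_mul, Matrix.mul_apply, Fin.sum_univ_two, hx, hy]
      ring
    have ht : (t : ℤ) ≠ 0 := Nat.cast_ne_zero.mpr (NeZero.ne t)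
    simp only [Subgroup.coe_mul, hAB, hx, hy, Int.mul_ediv_cancel_left _ ht, ← ofAdd_add]
    push_cast
    rw [hA.1, hB.2.1, one_mul, mul_one, add_comm]

lemma upperRightDivHom_surjective : Function.Surjective (upperRightDivHom t r) := by
  intro k
  have hdet : !![(1 : ℤ), t * (k.toAdd.val : ℤ); 0, 1].det = 1 := by
    simp [Matrix.det_fin_two_of]
  refine ⟨⟨⟨_, hdet⟩, by simp, by simp, by simp, by simp⟩, ?_⟩
  simp [upperRightDivHom, Int.mul_ediv_cancel_left _ (Nat.cast_ne_zero.mpr (NeZero.ne t))]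

lemma ker_upperRightDivHom :
    (upperRightDivHom t r).ker = (GammaTR t r).subgroupOf (Gamma0r t r) := by
  ext ⟨A, hA⟩
  have hb : (A 0 1 / t : ℤ) = (0 : ZMod t) ↔ ((t ^ 2 : ℕ) : ℤ) ∣ A 0 1 := by
    rw [ZMod.intCast_zmod_eq_zero_iff_dvd, Int.dvd_div_iff_mul_dvd (natCast_dvd_upperRight hA)]
    push_cast
    rw [sq]
  simp only [MonoidHom.mem_ker, Subgroup.mem_subgroupOf]
  exact hb.trans ⟨fun h ↦ ⟨hA.1, hA.2.1, (ZMod.intCast_zmod_eq_zero_iff_dvd _ _).mpr h, hA.2.2.2⟩,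
    fun h ↦ (ZMod.intCast_zmod_eq_zero_iff_dvd _ _).mp h.2.2.1⟩

end Gamma0r

theorem GammaTR_index_in_Gamma0r_general (t r : ℕ) (ht : 0 < t) :
    GammaTR t r ≤ Gamma0r t r ∧
    ((GammaTR t r).subgroupOf (Gamma0r t r)).index = t := by
  haveI : NeZero t := ⟨ht.ne'⟩
  refine ⟨GammaTR_le_Gamma0r t r, ?_⟩
  rw [← Gamma0r.ker_upperRightDivHom, Subgroup.index_ker,
    MonoidHom.range_eq_top.mpr (Gamma0r.upperRightDivHom_surjective t r), Subgroup.card_top,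
    Nat.card_eq_fintype_card, Fintype.card_multiplicative, ZMod.card]

theorem GammaTR_index_in_Gamma0r (t r : ℕ) (ht : 0 < t) (hr : 0 < r) (hdvd : r ∣ t) :
    GammaTR t r ≤ Gamma0r t r ∧
    ((GammaTR t r).subgroupOf (Gamma0r t r)).index = t :=
  GammaTR_index_in_Gamma0r_general t r ht
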